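/- Let p ∈ [1,∞] and q ∈ [1,∞] with 1/p + 1/q = 1. If f ∈ L^p(Ω,μ) and K_q(Γ) < ∞, then E‖β‖₂ ≤ √n · m · √(K_q(Γ)) · ‖f‖_{L^p(Ω)}; in particular β has finite expectation. -/

import Mathlib

open MeasureTheory ProbabilityTheory ENNReal Matrix Filter

noncomputable section

/-- The smallest eigenvalue `s₁(A)` of the symmetric positive semidefinite matrix `AᵀA`. -/
def s1 {m n : ℕ} (A : Matrix (Fin m) (Fin n) ℝ) : ℝ :=
  ⨅ i, (show (Aᵀ * A).IsHermitian by
    simpa [Matrix.conjTranspose_eq_transpose_of_trivial] using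
      Matrix.isHermitian_conjTranspose_mul_self A).eigenvalues i

/-- Euclidean norm on `ℝ^n`. -/
def enorm2 {n : ℕ} (v : Fin n → ℝ) : ℝ := Real.sqrt (∑ j, v j ^ 2)

/-- The matrix `Γ(x)` with entries `Γ(x)_{ij} = γ_j(x⁽ⁱ⁾)`. -/
def dmat {Ω : Type*} {n m : ℕ} (γ : Fin n → Ω → ℝ) (x : Fin m → Ω) :
    Matrix (Fin m) (Fin n) ℝ := Matrix.of fun i j => γ j (x i)

/-- The matrix `R(x) = (Γ(x)ᵀΓ(x))⁻¹Γ(x)ᵀ`. -/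
def Rmat {Ω : Type*} {n m : ℕ} (γ : Fin n → Ω → ℝ) (x : Fin m → Ω) :
    Matrix (Fin n) (Fin m) ℝ := ((dmat γ x)ᵀ * dmat γ x)⁻¹ * (dmat γ x)ᵀ

/-- `β(x) = R(x) F(x)` where `F(x)_i = f(x⁽ⁱ⁾)`. -/
def betaFn {Ω : Type*} {n m : ℕ} (γ : Fin n → Ω → ℝ) (f : Ω → ℝ) (x : Fin m → Ω) :
    Fin n → ℝ := Rmat γ x *ᵥ fun i => f (x i)

/-- The residue `ρ(a)(ω) = f(ω) - ∑ j a_j γ_j(ω)`. -/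
def resid {Ω : Type*} {n : ℕ} (γ : Fin n → Ω → ℝ) (f : Ω → ℝ) (a : Fin n → ℝ) : Ω → ℝ :=
  fun ω => f ω - ∑ j, a j * γ j ω

/-! Since `Γᵀ(Γβ - F) = 0`, `Γβ` is the orthogonal projection of `F`, so
`s₁ ‖β‖₂² ≤ ‖Γβ‖₂² ≤ ‖F‖₂² ≤ ‖F‖₁²`, i.e. `‖β‖₂ ≤ ∑ᵢ s₁^{-1/2} |f(X⁽ⁱ⁾)|`. As each `X⁽ⁱ⁾` has
law `μ`, Hölder's inequality bounds the expectation of each summand by `‖s₁^{-1/2}‖_q ‖f‖_p`;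
the factor `√n ≥ 1` is not needed. Measurability of `s₁` holds because
`{A | t ≤ s₁(A)} = {A | ∀ v, t ‖v‖² ≤ ‖A v‖²}` is closed. -/

open scoped MatrixOrder

section LeastSquares

variable {m n : ℕ}

lemma posSemidef_transpose_mul_self {ι κ : Type*} [Fintype ι] [Fintype κ] (A : Matrix ι κ ℝ) :
    (Aᵀ * A).PosSemidef := by
  simpa [conjTranspose_eq_transpose_of_trivial] using posSemidef_conjTranspose_mul_self A

lemma le_s1_iff [NeZero n] (A : Matrix (Fin m) (Fin n) ℝ) (t : ℝ) :
    t ≤ s1 A ↔ ∀ v, t * (v ⬝ᵥ v) ≤ (A *ᵥ v) ⬝ᵥ (A *ᵥ v) := by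
  have hG := (posSemidef_transpose_mul_self A).isHermitian
  -- `t` bounds every eigenvalue iff `t • 1 ≤ AᵀA` in the Loewner order.
  rw [s1, le_ciInf_iff (Set.finite_range _).bddBelow, ← Set.forall_mem_range (p := (t ≤ ·)),
    ← hG.spectrum_real_eq_range_eigenvalues, ← algebraMap_le_iff_le_spectrum hG.isSelfAdjoint,
    le_iff, posSemidef_iff_dotProduct_mulVec]
  refine (and_iff_right (hG.isSelfAdjoint.sub ((IsSelfAdjoint.all t).algebraMap _))).trans
    (forall_congr' fun v => ?_)
  rw [star_trivial, sub_mulVec, dotProduct_sub, sub_nonneg, Algebra.algebraMap_eq_smul_one,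
    smul_mulVec, one_mulVec, dotProduct_smul, smul_eq_mul, ← mulVec_mulVec, dotProduct_mulVec,
    vecMul_transpose]

lemma s1_nonneg [NeZero n] (A : Matrix (Fin m) (Fin n) ℝ) : 0 ≤ s1 A :=
  (le_s1_iff A 0).2 fun v => by simpa using dotProduct_star_self_nonneg (A *ᵥ v)

lemma s1_pos [NeZero n] {A : Matrix (Fin m) (Fin n) ℝ} (hA : IsUnit (Aᵀ * A).det) : 0 < s1 A := by
  have hG : (Aᵀ * A).PosDef :=
    (posSemidef_transpose_mul_self A).posDef_iff_isUnit.2 ((isUnit_iff_isUnit_det _).2 hA)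
  obtain ⟨i, hi⟩ := exists_eq_ciInf_of_finite (f := hG.isHermitian.eigenvalues)
  rw [s1, ← hi]
  exact hG.eigenvalues_pos i

lemma mulVec_dotProduct_self_le_of_normal_eq {ι κ : Type*} [Fintype ι] [Fintype κ]
    {A : Matrix ι κ ℝ} {b : κ → ℝ} {F : ι → ℝ} (hb : Aᵀ *ᵥ (A *ᵥ b) = Aᵀ *ᵥ F) :
    (A *ᵥ b) ⬝ᵥ (A *ᵥ b) ≤ F ⬝ᵥ F := by
  -- `A b` is the orthogonal projection of `F` onto the range of `A`.
  have hproj : (A *ᵥ b) ⬝ᵥ F = (A *ᵥ b) ⬝ᵥ (A *ᵥ b) := by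
    have hadj : ∀ G, (A *ᵥ b) ⬝ᵥ G = b ⬝ᵥ (Aᵀ *ᵥ G) := fun G => by
      rw [dotProduct_mulVec, vecMul_transpose]
    rw [hadj, ← hb, ← hadj]
  have := dotProduct_star_self_nonneg (F - A *ᵥ b)
  simp only [star_trivial, sub_dotProduct, dotProduct_sub, dotProduct_comm F, hproj] at this
  linarith

lemma transpose_mulVec_mulVec_pinv {ι κ : Type*} [Fintype ι] [Fintype κ] [DecidableEq κ]
    {A : Matrix ι κ ℝ} (hA : IsUnit (Aᵀ * A).det) (F : ι → ℝ) :
    Aᵀ *ᵥ (A *ᵥ (((Aᵀ * A)⁻¹ * Aᵀ) *ᵥ F)) = Aᵀ *ᵥ F := by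
  rw [mulVec_mulVec, mulVec_mulVec, ← Matrix.mul_assoc, mul_nonsing_inv _ hA, Matrix.one_mul]

lemma enorm2_eq_sqrt_dotProduct (v : Fin n → ℝ) : enorm2 v = √(v ⬝ᵥ v) := by
  simp [enorm2, dotProduct, sq]

lemma enorm2_le_sum_abs (v : Fin n → ℝ) : enorm2 v ≤ ∑ i, |v i| := by
  refine Real.sqrt_le_iff.2 ⟨by positivity, ?_⟩
  simpa only [sq_abs] using
    Finset.sum_sq_le_sq_sum_of_nonneg (s := Finset.univ) fun i _ => abs_nonneg (v i)

lemma enorm2_pinv_mulVec_le [NeZero n] {A : Matrix (Fin m) (Fin n) ℝ}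
    (hA : IsUnit (Aᵀ * A).det) (F : Fin m → ℝ) :
    enorm2 (((Aᵀ * A)⁻¹ * Aᵀ) *ᵥ F) ≤ √((s1 A)⁻¹) * enorm2 F := by
  set b := ((Aᵀ * A)⁻¹ * Aᵀ) *ᵥ F
  have hb : s1 A * (b ⬝ᵥ b) ≤ F ⬝ᵥ F :=
    ((le_s1_iff A _).1 le_rfl b).trans
      (mulVec_dotProduct_self_le_of_normal_eq (transpose_mulVec_mulVec_pinv hA F))
  rw [enorm2_eq_sqrt_dotProduct, enorm2_eq_sqrt_dotProduct,
    ← Real.sqrt_mul (inv_nonneg.2 (s1_nonneg A)), inv_mul_eq_div]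
  exact Real.sqrt_le_sqrt ((le_div_iff₀' (s1_pos hA)).2 hb)

end LeastSquares

lemma ofReal_enorm2_betaFn_le {Ω : Type*} {n m : ℕ} [NeZero n] (γ : Fin n → Ω → ℝ) (f : Ω → ℝ)
    {x : Fin m → Ω} (hx : IsUnit ((dmat γ x)ᵀ * dmat γ x).det) :
    ENNReal.ofReal (enorm2 (betaFn γ f x)) ≤ ∑ i, ‖√((s1 (dmat γ x))⁻¹) * f (x i)‖ₑ := by
  simp_rw [Real.enorm_eq_ofReal_abs, ← ofReal_sum_of_nonneg fun _ _ => abs_nonneg _]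
  refine ofReal_le_ofReal ?_
  calc enorm2 (betaFn γ f x) ≤ √((s1 (dmat γ x))⁻¹) * enorm2 fun i => f (x i) :=
        enorm2_pinv_mulVec_le hx _
    _ ≤ √((s1 (dmat γ x))⁻¹) * ∑ i, |f (x i)| := by gcongr; exact enorm2_le_sum_abs _
    _ = ∑ i, |√((s1 (dmat γ x))⁻¹) * f (x i)| := by
        simp [Finset.mul_sum, abs_mul, abs_of_nonneg (Real.sqrt_nonneg _)]

lemma isClosed_setOf_le_s1 {m n : ℕ} [NeZero n] (t : ℝ) :
    IsClosed {B : Fin m → Fin n → ℝ | t ≤ s1 (Matrix.of B)} := by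
  simp_rw [le_s1_iff, Set.ofPred_forall]
  refine isClosed_iInter fun v => isClosed_le (by fun_prop) ?_
  simp only [mulVec, dotProduct, of_apply]
  fun_prop

lemma measurable_s1_dmat {Ω : Type*} [MeasurableSpace Ω] {m n : ℕ} [NeZero n]
    {γ : Fin n → Ω → ℝ} (hγ : ∀ j, Measurable (γ j)) :
    Measurable fun x : Fin m → Ω => s1 (dmat γ x) :=
  measurable_of_Ici fun t => (isClosed_setOf_le_s1 t).measurableSet.preimage <|
    measurable_pi_lambda _ fun i => measurable_pi_lambda _ fun j =>
      (hγ j).comp (measurable_pi_apply i)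

lemma eLpNorm_sqrt {α : Type*} [MeasurableSpace α] {μ : Measure α} {g : α → ℝ} (hg : 0 ≤ g)
    (q : ℝ≥0∞) : eLpNorm (fun x => √(g x)) q μ = eLpNorm g (q / 2) μ ^ (1 / 2 : ℝ) := by
  have hsqrt : (fun x => √(g x)) = fun x => ‖g x‖ ^ (1 / 2 : ℝ) := by
    ext x
    rw [Real.norm_of_nonneg (hg x), Real.sqrt_eq_rpow]
  rw [hsqrt, eLpNorm_norm_rpow g (by norm_num), ENNReal.ofReal_div_of_pos two_pos, ofReal_one,
    ENNReal.ofReal_ofNat, ← div_eq_mul_one_div]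

lemma lintegral_sum_enorm_mul_comp_eval_le {ι Ω : Type*} [Fintype ι] [MeasurableSpace Ω]
    {μ : Measure Ω} [IsProbabilityMeasure μ] {p q : ℝ≥0∞} [HolderTriple q p 1]
    {C : (ι → Ω) → ℝ} (hC : AEStronglyMeasurable C (Measure.pi fun _ => μ))
    {f : Ω → ℝ} (hf : AEStronglyMeasurable f μ) :
    ∫⁻ x, ∑ i, ‖C x * f (x i)‖ₑ ∂(Measure.pi fun _ => μ) ≤
      Fintype.card ι * (eLpNorm C q (Measure.pi fun _ => μ) * eLpNorm f p μ) := by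
  have hf_eval (i : ι) : AEStronglyMeasurable (fun x : ι → Ω => f (x i)) (Measure.pi fun _ => μ) :=
    hf.comp_measurePreserving (measurePreserving_eval (fun _ => μ) i)
  have hterm (i : ι) : ∫⁻ x, ‖C x * f (x i)‖ₑ ∂(Measure.pi fun _ => μ) ≤
      eLpNorm C q (Measure.pi fun _ => μ) * eLpNorm f p μ :=
    calc ∫⁻ x, ‖C x * f (x i)‖ₑ ∂(Measure.pi fun _ => μ)
        = eLpNorm (fun x => C x * f (x i)) 1 (Measure.pi fun _ => μ) :=
          eLpNorm_one_eq_lintegral_enorm.symm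
      _ ≤ 1 * eLpNorm C q _ * eLpNorm (fun x : ι → Ω => f (x i)) p _ :=
          eLpNorm_le_eLpNorm_mul_eLpNorm'_of_norm hC (hf_eval i) (· * ·) 1
            (.of_forall fun x => by simp [norm_mul])
      _ = eLpNorm C q (Measure.pi fun _ => μ) * eLpNorm f p μ := by
          rw [one_mul, ← eLpNorm_comp_measurePreserving hf (measurePreserving_eval (fun _ => μ) i)]
          rfl
  rw [lintegral_finsetSum' _ (f := fun i x => ‖C x * f (x i)‖ₑ) fun i _ =>
    (hC.mul (hf_eval i)).enorm]
  grw [Finset.sum_le_sum fun i _ => hterm i]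
  rw [Finset.sum_const, nsmul_eq_mul, Finset.card_univ]

theorem stmt3_general {Ω : Type*} [MeasurableSpace Ω] (μ : Measure Ω) [IsProbabilityMeasure μ]
    (n m : ℕ) (hn : 1 ≤ n)
    (γ : Fin n → Ω → ℝ) (hγ : ∀ j, Measurable (γ j))
    (f : Ω → ℝ)
    (hinv : ∀ᵐ x ∂(Measure.pi fun _ : Fin m => μ), IsUnit ((dmat γ x)ᵀ * dmat γ x).det)
    (p q : ℝ≥0∞) (hpq : 1 / p + 1 / q = 1)
    (hf : MemLp f p μ)
    (hK : eLpNorm (fun x : Fin m → Ω => (s1 (dmat γ x))⁻¹) (q / 2)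
        (Measure.pi fun _ : Fin m => μ) < ⊤) :
    (∫⁻ x, ENNReal.ofReal (enorm2 (betaFn γ f x)) ∂(Measure.pi fun _ : Fin m => μ)
      ≤ ENNReal.ofReal (Real.sqrt n) * m *
        (eLpNorm (fun x : Fin m → Ω => (s1 (dmat γ x))⁻¹) (q / 2)
          (Measure.pi fun _ : Fin m => μ)) ^ (1 / 2 : ℝ) *
        eLpNorm f p μ) ∧
    ∫⁻ x, ENNReal.ofReal (enorm2 (betaFn γ f x)) ∂(Measure.pi fun _ : Fin m => μ) < ⊤ := by
  have : NeZero n := ⟨by omega⟩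
  have : HolderTriple q p 1 := ⟨by simpa [add_comm] using hpq⟩
  set ν := Measure.pi fun _ : Fin m => μ
  have hsqrt_n : 1 ≤ ENNReal.ofReal √n := by simpa using Real.one_le_sqrt.2 (Nat.one_le_cast.2 hn)
  have hbound : ∫⁻ x, ENNReal.ofReal (enorm2 (betaFn γ f x)) ∂ν ≤ ENNReal.ofReal √n * m *
      eLpNorm (fun x => (s1 (dmat γ x))⁻¹) (q / 2) ν ^ (1 / 2 : ℝ) * eLpNorm f p μ :=
    calc _ ≤ ∫⁻ x, ENNReal.ofReal √n * ∑ i, ‖√((s1 (dmat γ x))⁻¹) * f (x i)‖ₑ ∂ν :=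
          lintegral_mono_ae <| hinv.mono fun x hx =>
            (ofReal_enorm2_betaFn_le γ f hx).trans (le_mul_of_one_le_left' hsqrt_n)
      _ ≤ ENNReal.ofReal √n *
          (m * (eLpNorm (fun x => √((s1 (dmat γ x))⁻¹)) q ν * eLpNorm f p μ)) := by
          rw [lintegral_const_mul' _ _ ofReal_ne_top]
          gcongr
          simpa using lintegral_sum_enorm_mul_comp_eval_le
            (measurable_s1_dmat hγ).inv.sqrt.aestronglyMeasurable hf.1
      _ = _ := by
          rw [eLpNorm_sqrt fun x => inv_nonneg.2 (s1_nonneg _)]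
          ring
  have hf_lt_top := hf.2
  exact ⟨hbound, hbound.trans_lt (by finiteness)⟩

/-- Corollary 1: for `1/p + 1/q = 1`, if `f ∈ L^p(Ω,μ)` and `K_q(Γ) < ∞`,
then `E‖β‖₂ ≤ √n ⬝ m ⬝ √(K_q(Γ)) ⬝ ‖f‖_{L^p(Ω)}`; in particular `β` has finite expectation. -/
theorem stmt3 {Ω : Type*} [MeasurableSpace Ω] (μ : Measure Ω) [IsProbabilityMeasure μ]
    (n m : ℕ) (hn : 1 ≤ n) (hm : 1 ≤ m)
    (γ : Fin n → Ω → ℝ) (hγ : ∀ j, Measurable (γ j))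
    (f : Ω → ℝ) (hfm : Measurable f)
    (hinv : ∀ᵐ x ∂(Measure.pi fun _ : Fin m => μ), IsUnit ((dmat γ x)ᵀ * dmat γ x).det)
    (p q : ℝ≥0∞) (hp : 1 ≤ p) (hq : 1 ≤ q) (hpq : 1 / p + 1 / q = 1)
    (hf : MemLp f p μ)
    (hK : eLpNorm (fun x : Fin m → Ω => (s1 (dmat γ x))⁻¹) (q / 2)
        (Measure.pi fun _ : Fin m => μ) < ⊤) :
    (∫⁻ x, ENNReal.ofReal (enorm2 (betaFn γ f x)) ∂(Measure.pi fun _ : Fin m => μ)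
      ≤ ENNReal.ofReal (Real.sqrt n) * m *
        (eLpNorm (fun x : Fin m → Ω => (s1 (dmat γ x))⁻¹) (q / 2)
          (Measure.pi fun _ : Fin m => μ)) ^ (1 / 2 : ℝ) *
        eLpNorm f p μ) ∧
    ∫⁻ x, ENNReal.ofReal (enorm2 (betaFn γ f x)) ∂(Measure.pi fun _ : Fin m => μ) < ⊤ :=
  stmt3_general μ n m hn γ hγ f hinv p q hpq hf hK
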